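/- arXiv:1412.5849 — 4 statements merged into one kernel-verified Lean document; each statement's English description precedes it below -/
import Mathlib

section
/- Let G be a finite group of order at least 3. Then the rainbow connection number of the power graph Γ_G equals 3 if 1 ≤ |M_G| ≤ 2, and equals |M_G| if |M_G| ≥ 3. -/
/-- The power graph of a group `G`: distinct elements `x` and `y` are adjacent
iff one is a power of the other. -/
def powerGraph (G : Type*) [Group G] : SimpleGraph G where
  Adj x y := x ≠ y ∧ (x ∈ Subgroup.zpowers y ∨ y ∈ Subgroup.zpowers x)
  symm := ⟨fun x y h => ⟨h.1.symm, h.2.symm⟩⟩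
  loopless := ⟨fun x h => h.1 rfl⟩

/-- `ζ` is a rainbow `k`-coloring of `Γ`: every pair of vertices is joined by a
path whose edges receive pairwise distinct colors. -/
def IsRainbowColoring {V : Type*} (Γ : SimpleGraph V) {k : ℕ} (ζ : Sym2 V → Fin k) : Prop :=
  ∀ u v : V, ∃ p : Γ.Walk u v, p.IsPath ∧ (p.edges.map ζ).Nodup

/-- The rainbow connection number of `Γ`: the least `k` admitting a rainbow
`k`-coloring. -/
noncomputable def rainbowConnection {V : Type*} (Γ : SimpleGraph V) : ℕ :=
  sInf {k : ℕ | ∃ ζ : Sym2 V → Fin k, IsRainbowColoring Γ ζ}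

/-- An element `x` is a maximal involution if it has order 2 and the only
cyclic subgroup containing `x` is `⟨x⟩`. -/
def IsMaximalInvolution {G : Type*} [Group G] (x : G) : Prop :=
  orderOf x = 2 ∧ ∀ g : G, x ∈ Subgroup.zpowers g → Subgroup.zpowers g = Subgroup.zpowers x

/-!
A maximal involution `x` is a pendant vertex of the power graph, attached to `1`; so in a
rainbow coloring the edges `x — 1` receive pairwise distinct colors, and `rc ≥ |M_G|`.

Conversely `1` is adjacent to every vertex. Color the pendant edges injectively, every edge
avoiding `1` with a third color, and each remaining edge `u — 1` by a 2-coloring of the other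
vertices in which every `u` has a neighbour `w ≠ 1` of the opposite color (`w = u⁻¹` when
`o(u) ≥ 3`, a generator of a larger cyclic overgroup when `u` is a non-maximal involution).
Then `u — 1 — v` or `u — w — 1 — v` is a rainbow path.

With two colors every rainbow path has length at most 2. Two maximal involutions and a
fourth element (`|G|` is even) then need three colors at `1`. A unique maximal involution `x`
is central, so `G` has another involution `t`; the involutions `t` and `x t` get the same
color at `1`, but `1` is their only common neighbour.
-/

section RainbowPaths

variable {V : Type*} {Γ : SimpleGraph V} {k : ℕ}

def HasRainbowPath (Γ : SimpleGraph V) (ζ : Sym2 V → Fin k) (u v : V) : Prop :=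
  ∃ p : Γ.Walk u v, p.IsPath ∧ (p.edges.map ζ).Nodup

namespace HasRainbowPath

variable {ζ : Sym2 V → Fin k} {a b c d : V}

lemma refl (a : V) : HasRainbowPath Γ ζ a a :=
  ⟨.nil, by simp, by simp⟩

lemma symm (h : HasRainbowPath Γ ζ a b) : HasRainbowPath Γ ζ b a := by
  obtain ⟨p, hp, hnd⟩ := h
  exact ⟨p.reverse, hp.reverse, by simpa [List.map_reverse] using hnd⟩

lemma of_adj (h : Γ.Adj a b) : HasRainbowPath Γ ζ a b :=
  ⟨.cons h .nil, by simp [h.ne], by simp⟩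

lemma of_adj_adj (h₁ : Γ.Adj a b) (h₂ : Γ.Adj b c) (hac : a ≠ c)
    (hcol : ζ s(a, b) ≠ ζ s(b, c)) : HasRainbowPath Γ ζ a c :=
  ⟨.cons h₁ (.cons h₂ .nil), by simp [h₁.ne, h₂.ne, hac], by simp [hcol]⟩

lemma of_adj_adj_adj (h₁ : Γ.Adj a b) (h₂ : Γ.Adj b c) (h₃ : Γ.Adj c d)
    (hac : a ≠ c) (had : a ≠ d) (hbd : b ≠ d)
    (hcol₁₂ : ζ s(a, b) ≠ ζ s(b, c)) (hcol₁₃ : ζ s(a, b) ≠ ζ s(c, d))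
    (hcol₂₃ : ζ s(b, c) ≠ ζ s(c, d)) : HasRainbowPath Γ ζ a d :=
  ⟨.cons h₁ (.cons h₂ (.cons h₃ .nil)), by simp [h₁.ne, h₂.ne, h₃.ne, hac, had, hbd],
    by simp [hcol₁₂, hcol₁₃, hcol₂₃]⟩

end HasRainbowPath

lemma SimpleGraph.Walk.mem_edges_of_forall_adj_eq {x z v : V} (hx : ∀ w, Γ.Adj x w → w = z)
    (p : Γ.Walk x v) (hxv : x ≠ v) : s(x, z) ∈ p.edges := by
  cases p with
  | nil => exact absurd rfl hxv
  | cons h q =>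
    obtain rfl := hx _ h
    simp

namespace IsRainbowColoring

variable {ζ : Sym2 V → Fin k} {x y z u v : V}

lemma color_ne_of_forall_adj_eq (hζ : IsRainbowColoring Γ ζ) (hx : ∀ w, Γ.Adj x w → w = z)
    (hy : ∀ w, Γ.Adj y w → w = z) (hxy : x ≠ y) : ζ s(x, z) ≠ ζ s(y, z) := by
  obtain ⟨p, -, hnd⟩ := hζ x y
  have hxp := p.mem_edges_of_forall_adj_eq hx hxy
  have hyp : s(y, z) ∈ p.edges := by
    simpa using p.reverse.mem_edges_of_forall_adj_eq hy hxy.symm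
  exact fun heq => hxy (Sym2.congr_left.mp (List.inj_on_of_nodup_map hnd hxp hyp heq))

lemma card_le (hζ : IsRainbowColoring Γ ζ) (P : Set V) (hP : ∀ x ∈ P, ∀ w, Γ.Adj x w → w = z) :
    Nat.card P ≤ k := by
  have hinj : Function.Injective fun x : P => ζ s(x.1, z) := fun x y hxy =>
    Subtype.ext (not_not.mp fun hne => hζ.color_ne_of_forall_adj_eq (hP x x.2) (hP y y.2) hne hxy)
  simpa using Nat.card_le_card_of_injective _ hinj

lemma exists_adj_adj_of_not_adj (hζ : IsRainbowColoring Γ ζ) (hk : k ≤ 2) (huv : u ≠ v)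
    (hnadj : ¬Γ.Adj u v) : ∃ w, Γ.Adj u w ∧ Γ.Adj w v ∧ ζ s(u, w) ≠ ζ s(w, v) := by
  obtain ⟨p, -, hnd⟩ := hζ u v
  have hlen : p.length ≤ k := by simpa using hnd.length_le_card
  rcases p with _ | ⟨h₁, _ | ⟨h₂, _ | ⟨h₃, q⟩⟩⟩
  · exact absurd rfl huv
  · exact absurd h₁ hnadj
  · exact ⟨_, h₁, h₂, by simpa using hnd⟩
  · simp at hlen
    omega

lemma color_ne_of_forall_adj_eq_of_le_two (hζ : IsRainbowColoring Γ ζ) (hk : k ≤ 2)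
    (hx : ∀ w, Γ.Adj x w → w = z) (hvx : v ≠ x) (hvz : v ≠ z) : ζ s(x, z) ≠ ζ s(z, v) := by
  obtain ⟨w, hxw, -, hne⟩ :=
    hζ.exists_adj_adj_of_not_adj hk hvx.symm fun h => hvz (hx v h)
  obtain rfl := hx w hxw
  exact hne

lemma two_lt_of_forall_adj_eq_of_forall_adj_eq (hζ : IsRainbowColoring Γ ζ)
    (hx : ∀ w, Γ.Adj x w → w = z) (hy : ∀ w, Γ.Adj y w → w = z) (hxy : x ≠ y)
    (hvx : v ≠ x) (hvy : v ≠ y) (hvz : v ≠ z) : 2 < k := by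
  by_contra! hk
  have h₁ := hζ.color_ne_of_forall_adj_eq_of_le_two hk hx hvx hvz
  have h₂ := hζ.color_ne_of_forall_adj_eq_of_le_two hk hy hvy hvz
  have h₃ := hζ.color_ne_of_forall_adj_eq hx hy hxy
  omega

lemma two_lt_of_forall_adj_eq_of_common_neighbor (hζ : IsRainbowColoring Γ ζ)
    (hx : ∀ w, Γ.Adj x w → w = z) (hux : u ≠ x) (huz : u ≠ z) (hvx : v ≠ x) (hvz : v ≠ z)
    (huv : u ≠ v) (hnadj : ¬Γ.Adj u v) (hcommon : ∀ w, Γ.Adj u w → Γ.Adj w v → w = z) :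
    2 < k := by
  by_contra! hk
  have h₁ := hζ.color_ne_of_forall_adj_eq_of_le_two hk hx hux huz
  have h₂ := hζ.color_ne_of_forall_adj_eq_of_le_two hk hx hvx hvz
  obtain ⟨w, huw, hwv, hne⟩ := hζ.exists_adj_adj_of_not_adj hk huv hnadj
  obtain rfl := hcommon w huw hwv
  rw [Sym2.eq_swap] at hne
  omega

end IsRainbowColoring

end RainbowPaths

section StarColoring

variable {V : Type*} {k : ℕ}

def starColoring [DecidableEq V] (z : V) (col : V → Fin k) (mid : Fin k) : Sym2 V → Fin k :=
  Sym2.lift ⟨fun a b => if a = z then col b else if b = z then col a else mid,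
    fun a b => by dsimp only; split_ifs <;> simp_all⟩

variable [DecidableEq V] {z : V} {col : V → Fin k} {mid : Fin k}

@[simp]
lemma starColoring_mk_left (b : V) : starColoring z col mid s(z, b) = col b := by
  simp [starColoring]

@[simp]
lemma starColoring_mk_right (a : V) : starColoring z col mid s(a, z) = col a := by
  simp +contextual [starColoring]

lemma starColoring_mk_of_ne {a b : V} (ha : a ≠ z) (hb : b ≠ z) :
    starColoring z col mid s(a, b) = mid := by
  simp [starColoring, ha, hb]

end StarColoring

theorem exists_isRainbowColoring_of_forall_adj {V : Type*} {Γ : SimpleGraph V} {k : ℕ}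
    (hk : 3 ≤ k) (z : V) (hz : ∀ v, v ≠ z → Γ.Adj z v) (P : Set V)
    (hP : ∀ x ∈ P, ∀ w, Γ.Adj x w → w = z) (e : P ↪ Fin k) (c : V → Bool)
    (hc : ∀ u, u ≠ z → u ∉ P → ∃ w, Γ.Adj u w ∧ w ≠ z ∧ c w ≠ c u) :
    ∃ ζ : Sym2 V → Fin k, IsRainbowColoring Γ ζ := by
  classical
  let col : V → Fin k := fun v =>
    if hv : v ∈ P then e ⟨v, hv⟩ else ⟨(c v).toNat, (Bool.toNat_lt _).trans_le (by omega)⟩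
  let ζ := starColoring z col ⟨2, hk⟩
  have col_of_notMem {v : V} (hv : v ∉ P) : (col v : ℕ) = (c v).toNat := by simp [col, hv]
  have detour {u v : V} (huz : u ≠ z) (huP : u ∉ P) (hvz : v ≠ z) (huv : u ≠ v)
      (hnadj : ¬Γ.Adj u v) (hcol : col u = col v) : HasRainbowPath Γ ζ u v := by
    obtain ⟨w, huw, hwz, hcw⟩ := hc u huz huP
    have hwP : w ∉ P := fun hw => huz (hP w hw u huw.symm)
    have hcw' : (c w).toNat ≠ (c u).toNat := by cases h : c w <;> cases h' : c u <;> simp_all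
    refine .of_adj_adj_adj huw (hz w hwz).symm (hz v hvz) huz huv (fun h => hnadj (h ▸ huw))
      ?_ ?_ ?_ <;> simp only [ζ, starColoring_mk_of_ne huz hwz, starColoring_mk_left,
        starColoring_mk_right, ← hcol, ne_eq, Fin.ext_iff, col_of_notMem huP, col_of_notMem hwP]
    · have := Bool.toNat_lt (c w); omega
    · have := Bool.toNat_lt (c u); omega
    · exact hcw'
  refine ⟨ζ, fun u v => show HasRainbowPath Γ ζ u v from ?_⟩
  rcases eq_or_ne u v with rfl | huv
  · exact .refl u
  by_cases hadj : Γ.Adj u v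
  · exact .of_adj hadj
  have huz : u ≠ z := by rintro rfl; exact hadj (hz v huv.symm)
  have hvz : v ≠ z := by rintro rfl; exact hadj (hz u huv).symm
  by_cases hcol : col u = col v
  · by_cases huP : u ∈ P
    · have hvP : v ∉ P := fun hvP => huv <| by
        simpa [col, huP, hvP] using hcol
      exact (detour hvz hvP huz huv.symm (fun h => hadj h.symm) hcol.symm).symm
    · exact detour huz huP hvz huv hadj hcol
  · exact .of_adj_adj (hz u huz).symm (hz v hvz) huv (by simpa [ζ] using hcol)

lemma exists_bool_ne_of_involutive {α : Type*} {σ : α → α} (hσ : Function.Involutive σ) :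
    ∃ c : α → Bool, ∀ a, σ a ≠ a → c (σ a) ≠ c a := by
  classical
  let := linearOrderOfSTO (WellOrderingRel (α := α))
  refine ⟨fun a => decide (a < σ a), fun a ha => ?_⟩
  rcases lt_or_gt_of_ne ha with h | h <;> simp [hσ a, h, not_lt_of_gt h]

open Subgroup

section PowerGraph

variable {G : Type*} [Group G]

lemma powerGraph_adj_one {g : G} (hg : g ≠ 1) : (powerGraph G).Adj 1 g :=
  ⟨hg.symm, Or.inl (one_mem _)⟩

lemma eq_one_or_eq_of_mem_zpowers_of_orderOf_eq_two {x y : G} (hx : orderOf x = 2)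
    (hy : y ∈ zpowers x) : y = 1 ∨ y = x := by
  obtain ⟨k, rfl⟩ := mem_zpowers_iff.mp hy
  rw [← zpow_mod_orderOf, hx]
  rcases Int.emod_two_eq_zero_or_one k with h | h <;> simp [h]

lemma ne_one_of_orderOf_eq_two {x : G} (hx : orderOf x = 2) : x ≠ 1 := by
  rintro rfl
  simp at hx

lemma eq_one_or_mem_zpowers_of_powerGraph_adj {t w : G} (ht : orderOf t = 2)
    (h : (powerGraph G).Adj t w) : w = 1 ∨ t ∈ zpowers w := by
  obtain ⟨hne, htw | hwt⟩ := h
  · exact .inr htw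
  · exact (eq_one_or_eq_of_mem_zpowers_of_orderOf_eq_two ht hwt).imp_right
      fun h => absurd h.symm hne

lemma powerGraph_not_adj_of_orderOf_eq_two {x y : G} (hx : orderOf x = 2) (hy : orderOf y = 2) :
    ¬(powerGraph G).Adj x y := by
  rintro ⟨hne, hxy | hyx⟩
  · exact (eq_one_or_eq_of_mem_zpowers_of_orderOf_eq_two hy hxy).elim
      (ne_one_of_orderOf_eq_two hx) hne
  · exact (eq_one_or_eq_of_mem_zpowers_of_orderOf_eq_two hx hyx).elim
      (ne_one_of_orderOf_eq_two hy) hne.symm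

lemma orderOf_mul_eq_two_of_commute {x y : G} (hx : orderOf x = 2) (hy : orderOf y = 2)
    (hc : Commute x y) (hxy : x ≠ y) : orderOf (x * y) = 2 := by
  have hy' : y⁻¹ = y := inv_eq_of_mul_eq_one_right (by rw [← sq, ← hy, pow_orderOf_eq_one])
  refine orderOf_eq_prime ?_ fun h => hxy (hy' ▸ mul_eq_one_iff_eq_inv.mp h)
  rw [hc.mul_pow, ← hx, pow_orderOf_eq_one, one_mul, hx, ← hy, pow_orderOf_eq_one]

lemma inv_ne_self_of_two_lt_orderOf {u : G} (hu : 2 < orderOf u) : u⁻¹ ≠ u := by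
  intro h
  have : u ^ 2 = 1 := by rw [sq]; nth_rw 1 [← h]; exact inv_mul_cancel u
  have := Nat.le_of_dvd two_pos (orderOf_dvd_of_pow_eq_one this)
  omega

lemma isMaximalInvolution_iff {x : G} :
    IsMaximalInvolution x ↔ orderOf x = 2 ∧ ∀ g, x ∈ zpowers g → g ∈ zpowers x :=
  and_congr_right fun _ => forall_congr' fun g => imp_congr_right fun hxg =>
    ⟨fun h => h ▸ mem_zpowers g, fun h => le_antisymm (zpowers_le.mpr h) (zpowers_le.mpr hxg)⟩

namespace IsMaximalInvolution

variable {x : G}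

lemma ne_one (hx : IsMaximalInvolution x) : x ≠ 1 := ne_one_of_orderOf_eq_two hx.1

lemma eq_one_or_eq_of_mem_zpowers (hx : IsMaximalInvolution x) {g : G} (hg : x ∈ zpowers g) :
    g = 1 ∨ g = x :=
  eq_one_or_eq_of_mem_zpowers_of_orderOf_eq_two hx.1 (isMaximalInvolution_iff.mp hx |>.2 g hg)

lemma eq_one_of_powerGraph_adj (hx : IsMaximalInvolution x) {w : G}
    (h : (powerGraph G).Adj x w) : w = 1 :=
  (eq_one_or_mem_zpowers_of_powerGraph_adj hx.1 h).elim id fun hxw =>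
    (hx.eq_one_or_eq_of_mem_zpowers hxw).resolve_right h.1.symm

lemma map {H : Type*} [Group H] (hx : IsMaximalInvolution x) (φ : G ≃* H) :
    IsMaximalInvolution (φ x) := by
  have mem_iff (y z : G) : φ y ∈ zpowers (φ z) ↔ y ∈ zpowers z := by
    simp only [mem_zpowers_iff, ← map_zpow, φ.injective.eq_iff]
  refine isMaximalInvolution_iff.mpr ⟨(φ.orderOf_eq x).trans hx.1, fun g hg => ?_⟩
  rw [← φ.apply_symm_apply g, mem_iff] at hg ⊢
  exact (isMaximalInvolution_iff.mp hx).2 _ hg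

lemma commute_of_forall_eq (hx : IsMaximalInvolution x)
    (huniq : ∀ y, IsMaximalInvolution y → y = x) (a : G) : Commute a x := by
  have := huniq _ (hx.map (MulAut.conj a))
  rw [MulAut.conj_apply] at this
  exact mul_inv_eq_iff_eq_mul.mp this

/-- If `x` were central and `g ∉ {1, x}` had odd order `n`, then `(x g)ⁿ = x` would put `x`
into the cyclic group `⟨x g⟩`, forcing `x g ∈ {1, x}`. -/
lemma even_orderOf_of_forall_commute (hx : IsMaximalInvolution x) (hc : ∀ a, Commute a x)
    {g : G} (hg1 : g ≠ 1) (hgx : g ≠ x) : Even (orderOf g) := by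
  by_contra hodd
  rw [Nat.not_even_iff_odd] at hodd
  have hpow : (x * g) ^ orderOf g = x := by
    rw [(hc g).symm.mul_pow, pow_orderOf_eq_one, mul_one, ← pow_mod_orderOf, hx.1,
      Nat.odd_iff.mp hodd, pow_one]
  rcases hx.eq_one_or_eq_of_mem_zpowers (hpow ▸ npow_mem_zpowers _ _) with h | h
  · have hx2 : x * x = 1 := by rw [← sq, ← hx.1, pow_orderOf_eq_one]
    exact hgx (mul_left_cancel (h.trans hx2.symm))
  · exact hg1 (mul_eq_left.mp h)

lemma exists_orderOf_eq_two_ne [Fintype G] (hx : IsMaximalInvolution x)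
    (hG : 3 ≤ Fintype.card G) (hc : ∀ a, Commute a x) : ∃ t, orderOf t = 2 ∧ t ≠ x := by
  classical
  obtain ⟨g, -, hg⟩ := Finset.exists_mem_notMem_of_card_lt_card
    ((Finset.card_le_two (a := 1) (b := x)).trans_lt (by rw [Finset.card_univ]; omega))
  simp only [Finset.mem_insert, Finset.mem_singleton, not_or] at hg
  have heven := hx.even_orderOf_of_forall_commute hc hg.1 hg.2
  refine ⟨g ^ (orderOf g / 2), orderOf_pow_orderOf_div (orderOf_pos g).ne' heven.two_dvd,
    fun h => ?_⟩
  rcases hx.eq_one_or_eq_of_mem_zpowers (h ▸ npow_mem_zpowers g _) with h' | h'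
  exacts [hg.1 h', hg.2 h']

end IsMaximalInvolution


lemma exists_two_lt_orderOf_of_not_isMaximalInvolution [Finite G] {u : G} (hu : orderOf u = 2)
    (hum : ¬IsMaximalInvolution u) : ∃ g, u ∈ zpowers g ∧ 2 < orderOf g := by
  obtain ⟨g, hug, hne⟩ : ∃ g, u ∈ zpowers g ∧ zpowers g ≠ zpowers u := by
    simpa [IsMaximalInvolution, hu] using hum
  refine ⟨g, hug, ?_⟩
  have hg0 := (orderOf_pos g).ne'
  have hg1 : orderOf g ≠ 1 := fun h => ne_one_of_orderOf_eq_two hu <| by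
    simpa [orderOf_eq_one_iff.mp h] using hug
  have hg2 : orderOf g ≠ 2 := fun h =>
    (eq_one_or_eq_of_mem_zpowers_of_orderOf_eq_two h hug).elim (ne_one_of_orderOf_eq_two hu)
      fun hug => hne (hug ▸ rfl)
  omega

lemma exists_bool_powerGraph_adj_ne [Finite G] :
    ∃ c : G → Bool, ∀ u, u ≠ 1 → ¬IsMaximalInvolution u →
      ∃ w, (powerGraph G).Adj u w ∧ w ≠ 1 ∧ c w ≠ c u := by
  classical
  obtain ⟨b, hb⟩ := exists_bool_ne_of_involutive (inv_involutive (G := G))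
  have : ∀ u : G, ∃ g, orderOf u = 2 → ¬IsMaximalInvolution u → u ∈ zpowers g ∧ 2 < orderOf g :=
    fun u => if hu : orderOf u = 2 ∧ ¬IsMaximalInvolution u then
      (exists_two_lt_orderOf_of_not_isMaximalInvolution hu.1 hu.2).imp fun _ hg _ _ => hg
    else ⟨1, fun h h' => absurd ⟨h, h'⟩ hu⟩
  choose f hf using this
  refine ⟨fun u => if 2 < orderOf u then b u else !b (f u), fun u hu1 hum => ?_⟩
  by_cases hu : 2 < orderOf u
  · refine ⟨u⁻¹, ⟨(inv_ne_self_of_two_lt_orderOf hu).symm, .inl (by simp)⟩, inv_ne_one.mpr hu1,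
      ?_⟩
    simpa [orderOf_inv, hu] using hb u (inv_ne_self_of_two_lt_orderOf hu)
  · have hu2 : orderOf u = 2 := by
      have := (orderOf_pos u).ne'
      have : orderOf u ≠ 1 := by simpa using hu1
      omega
    obtain ⟨hmem, hf2⟩ := hf u hu2 hum
    refine ⟨f u, ⟨fun h => by simp [← h, hu2] at hf2, .inl hmem⟩, fun h => by simp [h] at hf2,
      by simp [hf2, hu]⟩

lemma exists_isRainbowColoring_powerGraph [Finite G] {k : ℕ} (hk : 3 ≤ k)
    (hM : Nat.card {x : G // IsMaximalInvolution x} ≤ k) :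
    ∃ ζ : Sym2 G → Fin k, IsRainbowColoring (powerGraph G) ζ := by
  obtain ⟨c, hc⟩ := exists_bool_powerGraph_adj_ne (G := G)
  exact exists_isRainbowColoring_of_forall_adj hk 1 (fun _ => powerGraph_adj_one)
    {x | IsMaximalInvolution x} (fun _ hx _ => hx.eq_one_of_powerGraph_adj)
    ((Finite.equivFin _).toEmbedding.trans (Fin.castLEEmb hM)) c hc

variable [Fintype G] {k : ℕ} {ζ : Sym2 G → Fin k}

lemma two_lt_of_isRainbowColoring_of_isMaximalInvolution_ne
    (hζ : IsRainbowColoring (powerGraph G) ζ) {x y : G} (hx : IsMaximalInvolution x)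
    (hy : IsMaximalInvolution y) (hxy : x ≠ y) : 2 < k := by
  classical
  have hthree : 3 ≤ Fintype.card G :=
    Finset.card_le_univ ({1, x, y} : Finset G) |>.trans_eq' <|
      Finset.card_eq_three.mpr ⟨1, x, y, hx.ne_one.symm, hy.ne_one.symm, hxy, rfl⟩
  have hfour : 3 < Fintype.card G := by
    have : 2 ∣ Fintype.card G := hx.1 ▸ orderOf_dvd_card
    omega
  obtain ⟨v, -, hv⟩ := Finset.exists_mem_notMem_of_card_lt_card
    ((Finset.card_le_three (a := 1) (b := x) (c := y)).trans_lt (by rwa [Finset.card_univ]))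
  simp only [Finset.mem_insert, Finset.mem_singleton, not_or] at hv
  exact hζ.two_lt_of_forall_adj_eq_of_forall_adj_eq (fun _ => hx.eq_one_of_powerGraph_adj)
    (fun _ => hy.eq_one_of_powerGraph_adj) hxy hv.2.1 hv.2.2 hv.1

/-- A common neighbour `w ≠ 1` of `t` and `x t` has both in `⟨w⟩`, hence `x ∈ ⟨w⟩`, so
`⟨w⟩ = ⟨x⟩ ∋ t`. -/
lemma two_lt_of_isRainbowColoring_of_forall_eq (hζ : IsRainbowColoring (powerGraph G) ζ)
    (hG : 3 ≤ Fintype.card G) {x : G} (hx : IsMaximalInvolution x)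
    (huniq : ∀ y, IsMaximalInvolution y → y = x) : 2 < k := by
  have hc := hx.commute_of_forall_eq huniq
  obtain ⟨t, ht, htx⟩ := hx.exists_orderOf_eq_two_ne hG hc
  have ht1 := ne_one_of_orderOf_eq_two ht
  have hu := orderOf_mul_eq_two_of_commute hx.1 ht (hc t).symm htx.symm
  refine hζ.two_lt_of_forall_adj_eq_of_common_neighbor (fun _ => hx.eq_one_of_powerGraph_adj)
    htx ht1 (fun h => ht1 (mul_eq_left.mp h)) (ne_one_of_orderOf_eq_two hu)
    (fun h => hx.ne_one (mul_eq_right.mp h.symm)) (powerGraph_not_adj_of_orderOf_eq_two ht hu)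
    fun w htw hwu => by_contra fun hw1 => ?_
  have htw' := (eq_one_or_mem_zpowers_of_powerGraph_adj ht htw).resolve_left hw1
  have huw := (eq_one_or_mem_zpowers_of_powerGraph_adj hu hwu.symm).resolve_left hw1
  have hxw : x ∈ zpowers w := by simpa using mul_mem huw (inv_mem htw')
  obtain rfl := (hx.eq_one_or_eq_of_mem_zpowers hxw).resolve_left hw1
  exact (eq_one_or_eq_of_mem_zpowers_of_orderOf_eq_two hx.1 htw').elim ht1 htx

lemma three_le_of_isRainbowColoring_powerGraph (hζ : IsRainbowColoring (powerGraph G) ζ)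
    (hG : 3 ≤ Fintype.card G) (hM : Nonempty {x : G // IsMaximalInvolution x}) : 3 ≤ k := by
  obtain ⟨x, hx⟩ := hM
  by_cases h : ∃ y, IsMaximalInvolution y ∧ y ≠ x
  · obtain ⟨y, hy, hyx⟩ := h
    exact two_lt_of_isRainbowColoring_of_isMaximalInvolution_ne hζ hx hy hyx.symm
  · push Not at h
    exact two_lt_of_isRainbowColoring_of_forall_eq hζ hG hx h

end PowerGraph

lemma rainbowConnection_eq {V : Type*} {Γ : SimpleGraph V} {n : ℕ}
    (h : ∃ ζ : Sym2 V → Fin n, IsRainbowColoring Γ ζ)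
    (hle : ∀ k (ζ : Sym2 V → Fin k), IsRainbowColoring Γ ζ → n ≤ k) :
    rainbowConnection Γ = n :=
  le_antisymm (Nat.sInf_le h) (le_csInf ⟨n, h⟩ fun k ⟨ζ, hζ⟩ => hle k ζ hζ)

theorem rc_powerGraph_of_maximalInvolutions_nonempty
    (G : Type*) [Group G] [Fintype G] (hG : 3 ≤ Fintype.card G) :
    (1 ≤ Nat.card {x : G // IsMaximalInvolution x} ∧
        Nat.card {x : G // IsMaximalInvolution x} ≤ 2 →
      rainbowConnection (powerGraph G) = 3) ∧
    (3 ≤ Nat.card {x : G // IsMaximalInvolution x} →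
      rainbowConnection (powerGraph G) = Nat.card {x : G // IsMaximalInvolution x}) := by
  refine ⟨fun ⟨hM₁, hM₂⟩ => ?_, fun hM₃ => ?_⟩
  · exact rainbowConnection_eq (exists_isRainbowColoring_powerGraph le_rfl (by omega))
      fun k ζ hζ => three_le_of_isRainbowColoring_powerGraph hζ hG (Finite.card_pos_iff.mp hM₁)
  · exact rainbowConnection_eq (exists_isRainbowColoring_powerGraph hM₃ le_rfl)
      fun k ζ hζ => hζ.card_le {x | IsMaximalInvolution x} fun _ hx _ => hx.eq_one_of_powerGraph_adj
end

section
/- For every finite group G, the rainbow connection number of the power graph Γ_G is at most max{|M_G|, 3}, where |M_G| is the number of maximal involutions of G. -/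
/-!
Colour every edge `1 – x` of the power graph by a colour attached to `x`, and every edge avoiding
the identity by one fixed colour `c₀`. The maximal involutions receive pairwise distinct colours;
every other non-identity element is coloured `c₁` or `c₂`, in such a way that `x` and `x⁻¹` get
different colours whenever `x ≠ x⁻¹`. Two vertices of different colours are joined through `1`.
Two distinct vertices of the same colour cannot both be maximal involutions, and a vertex `v` that
is not one lies in `⟨w⟩` for some `w` of the other colour among `c₁, c₂`: take `w = v⁻¹` if
`v ≠ v⁻¹`, and otherwise a generator `g` or `g⁻¹` of a cyclic subgroup strictly containing `⟨v⟩`.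
The path `u – 1 – w – v` is then rainbow. This uses `max {|M_G|, 3}` colours.
-/

open Subgroup SimpleGraph

theorem Function.Involutive.exists_transversal {α : Type*} {σ : α → α}
    (hσ : Function.Involutive σ) :
    ∃ T : Set α, (∀ a ∈ T, σ a ≠ a) ∧ ∀ a, σ a ≠ a → (σ a ∈ T ↔ a ∉ T) := by
  refine ⟨{a | WellOrderingRel a (σ a)}, fun a ha hfix => ?_, fun a hne => ?_⟩
  · rw [Set.mem_ofPred_eq, hfix] at ha
    exact irrefl_of _ _ ha
  · simp only [Set.mem_ofPred_eq, hσ a]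
    refine ⟨fun h h' => asymm_of _ h h', fun h => ?_⟩
    rcases trichotomous_of WellOrderingRel a (σ a) with h' | h' | h'
    exacts [absurd h' h, absurd h'.symm hne, h']

namespace SimpleGraph

variable {V : Type*} {k : ℕ}

open Classical in
noncomputable def hubColoring (o : V) (χ : V → Fin k) (c : Fin k) : Sym2 V → Fin k :=
  Sym2.lift ⟨fun a b => if a = o then χ b else if b = o then χ a else c, fun a b => by
    dsimp only
    split_ifs <;> simp_all⟩

section HubColoring

variable {o : V} {χ : V → Fin k} {c : Fin k}

lemma hubColoring_hub_left (x : V) : hubColoring o χ c s(o, x) = χ x := by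
  simp [hubColoring]

lemma hubColoring_hub_right (x : V) : hubColoring o χ c s(x, o) = χ x := by
  by_cases hx : x = o <;> simp [hubColoring, hx]

lemma hubColoring_of_ne {a b : V} (ha : a ≠ o) (hb : b ≠ o) : hubColoring o χ c s(a, b) = c := by
  simp [hubColoring, ha, hb]

/-- Every `u` with `χ u = χ v` then reaches `v` along the rainbow path `u – o – w – v`. -/
def HasDetour (Γ : SimpleGraph V) (o : V) (χ : V → Fin k) (c : Fin k) (v : V) : Prop :=
  χ v ≠ c ∧ ∃ w, w ≠ o ∧ Γ.Adj w v ∧ χ w ≠ χ v ∧ χ w ≠ c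

variable {Γ : SimpleGraph V}

lemma exists_rainbow_path_symm {α : Type*} {ζ : Sym2 V → α} {u v : V}
    (h : ∃ p : Γ.Walk u v, p.IsPath ∧ (p.edges.map ζ).Nodup) :
    ∃ p : Γ.Walk v u, p.IsPath ∧ (p.edges.map ζ).Nodup := by
  obtain ⟨p, hp, hnd⟩ := h
  exact ⟨p.reverse, hp.reverse, by simpa [Walk.edges_reverse, List.map_reverse] using hnd⟩

lemma exists_rainbow_path_via_hub (hub : ∀ x, x ≠ o → Γ.Adj o x) {u v : V} (hu : u ≠ o)
    (hv : v ≠ o) (huv : u ≠ v) (hχ : χ u ≠ χ v) :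
    ∃ p : Γ.Walk u v, p.IsPath ∧ (p.edges.map (hubColoring o χ c)).Nodup := by
  refine ⟨.cons (hub u hu).symm (.cons (hub v hv) .nil), ?_, ?_⟩
  · simp [Walk.isPath_def, hu, huv, hv.symm]
  · simp [hubColoring_hub_left, hubColoring_hub_right, hχ]

lemma exists_rainbow_path_of_hasDetour (hub : ∀ x, x ≠ o → Γ.Adj o x) {u v : V} (hu : u ≠ o)
    (hv : v ≠ o) (huv : u ≠ v) (hχ : χ u = χ v) (hdet : Γ.HasDetour o χ c v) :
    ∃ p : Γ.Walk u v, p.IsPath ∧ (p.edges.map (hubColoring o χ c)).Nodup := by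
  obtain ⟨hvc, w, hw, hwv, hwχ, hwc⟩ := hdet
  have huw : u ≠ w := fun h => hwχ (h ▸ hχ)
  refine ⟨.cons (hub u hu).symm (.cons (hub w hw) (.cons hwv .nil)), ?_, ?_⟩
  · simp [Walk.isPath_def, hu, huw, huv, hw.symm, hv.symm, hwv.ne]
  · simp only [Walk.edges_cons, Walk.edges_nil, List.map_cons, List.map_nil,
      hubColoring_hub_left, hubColoring_hub_right, hubColoring_of_ne hw hv]
    simp [hχ, hvc, hwc, Ne.symm hwχ]

theorem isRainbowColoring_hubColoring (hub : ∀ x, x ≠ o → Γ.Adj o x)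
    (hχ : Set.InjOn χ {v | v ≠ o ∧ ¬ Γ.HasDetour o χ c v}) :
    IsRainbowColoring Γ (hubColoring o χ c) := by
  intro u v
  rcases eq_or_ne u v with rfl | huv
  · exact ⟨.nil, .nil, by simp⟩
  by_cases hu : u = o
  · subst hu
    exact ⟨.cons (hub v (Ne.symm huv)) .nil, by simp [Walk.isPath_def, huv], by simp⟩
  by_cases hv : v = o
  · subst hv
    exact exists_rainbow_path_symm
      ⟨.cons (hub u hu) .nil, by simp [Walk.isPath_def, Ne.symm hu], by simp⟩
  by_cases hcol : χ u = χ v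
  · by_cases hdet : Γ.HasDetour o χ c v
    · exact exists_rainbow_path_of_hasDetour hub hu hv huv hcol hdet
    by_cases hdet' : Γ.HasDetour o χ c u
    · exact exists_rainbow_path_symm
        (exists_rainbow_path_of_hasDetour hub hv hu (Ne.symm huv) hcol.symm hdet')
    exact absurd (hχ ⟨hu, hdet'⟩ ⟨hv, hdet⟩ hcol) huv
  · exact exists_rainbow_path_via_hub hub hu hv huv hcol

end HubColoring

end SimpleGraph

section PowerGraph

variable {G : Type*} [Group G]

lemma powerGraph_adj_one_s2 {x : G} (hx : x ≠ 1) : (powerGraph G).Adj 1 x :=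
  ⟨hx.symm, .inl (one_mem _)⟩

lemma powerGraph_adj_of_mem_zpowers {w v : G} (hne : w ≠ v) (h : v ∈ zpowers w) :
    (powerGraph G).Adj w v :=
  ⟨hne, .inr h⟩

lemma IsMaximalInvolution.inv_eq {x : G} (h : IsMaximalInvolution x) : x⁻¹ = x :=
  inv_eq_of_mul_eq_one_right (by rw [← pow_two, ← h.1, pow_orderOf_eq_one])

lemma exists_inv_ne_mem_zpowers {v : G} (hv : v ≠ 1) (hm : ¬ IsMaximalInvolution v) :
    ∃ g : G, g⁻¹ ≠ g ∧ v ∈ zpowers g := by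
  by_cases hvi : v⁻¹ = v
  · have hord : orderOf v = 2 :=
      orderOf_eq_prime (by rw [pow_two]; nth_rw 1 [← hvi]; exact inv_mul_cancel v) hv
    obtain ⟨g, hvg, hgv⟩ : ∃ g, v ∈ zpowers g ∧ zpowers g ≠ zpowers v := by
      simpa [IsMaximalInvolution, hord] using hm
    -- if `g⁻¹ = g` then `v ∈ {1, g}`, forcing `⟨g⟩ = ⟨v⟩`
    refine ⟨g, fun hgi => ?_, hvg⟩
    have hg2 : g ^ (2 : ℤ) = 1 := by
      rw [zpow_two]; nth_rw 1 [← hgi]; exact inv_mul_cancel g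
    obtain ⟨m, rfl⟩ := mem_zpowers_iff.1 hvg
    rw [zpow_eq_zpow_emod m hg2] at hv hgv
    rcases Int.emod_two_eq m with h | h <;> simp [h] at hv hgv
  · exact ⟨v, hvi, mem_zpowers v⟩

open Classical in
noncomputable def powerGraphVertexColoring {k : ℕ} (ι : {x : G // IsMaximalInvolution x} ↪ Fin k)
    (e : Fin 3 ↪ Fin k) (T : Set G) (x : G) : Fin k :=
  if h : IsMaximalInvolution x then ι ⟨x, h⟩ else if x ∈ T then e 2 else e 1

section VertexColoring

variable {k : ℕ} {ι : {x : G // IsMaximalInvolution x} ↪ Fin k} {e : Fin 3 ↪ Fin k} {T : Set G}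

lemma powerGraphVertexColoring_of_isMaximalInvolution {x : G} (h : IsMaximalInvolution x) :
    powerGraphVertexColoring ι e T x = ι ⟨x, h⟩ := by
  simp [powerGraphVertexColoring, h]

lemma powerGraphVertexColoring_of_mem {x : G} (hx : x⁻¹ ≠ x) (hT : x ∈ T) :
    powerGraphVertexColoring ι e T x = e 2 := by
  have hm : ¬ IsMaximalInvolution x := fun h => hx h.inv_eq
  simp [powerGraphVertexColoring, hT, hm]

lemma powerGraphVertexColoring_of_not_mem {x : G} (hm : ¬ IsMaximalInvolution x) (hT : x ∉ T) :
    powerGraphVertexColoring ι e T x = e 1 := by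
  simp [powerGraphVertexColoring, hT, hm]

lemma hasDetour_powerGraph (hT₁ : ∀ a ∈ T, a⁻¹ ≠ a)
    (hT₂ : ∀ a : G, a⁻¹ ≠ a → (a⁻¹ ∈ T ↔ a ∉ T)) {v : G} (hv : v ≠ 1)
    (hm : ¬ IsMaximalInvolution v) :
    (powerGraph G).HasDetour 1 (powerGraphVertexColoring ι e T) (e 0) v := by
  have he : ∀ i j : Fin 3, i ≠ j → e i ≠ e j := fun i j => e.injective.ne
  by_cases hvT : v ∈ T
  · have hvi := hT₁ v hvT
    have hviT : v⁻¹ ∉ T := fun h => (hT₂ v hvi).1 h hvT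
    have hmi : ¬ IsMaximalInvolution v⁻¹ := fun h => hvi (by simpa using h.inv_eq.symm)
    rw [HasDetour, powerGraphVertexColoring_of_mem hvi hvT]
    refine ⟨he 2 0 (by decide), v⁻¹, inv_ne_one.2 hv,
      powerGraph_adj_of_mem_zpowers hvi (by simp [zpowers_inv]), ?_⟩
    rw [powerGraphVertexColoring_of_not_mem hmi hviT]
    exact ⟨he 1 2 (by decide), he 1 0 (by decide)⟩
  · obtain ⟨g, hg, hvg⟩ := exists_inv_ne_mem_zpowers hv hm
    obtain ⟨w, hwT, hvw⟩ : ∃ w ∈ T, v ∈ zpowers w := by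
      by_cases hgT : g ∈ T
      · exact ⟨g, hgT, hvg⟩
      · exact ⟨g⁻¹, (hT₂ g hg).2 hgT, by rwa [zpowers_inv]⟩
    have hw1 : w ≠ 1 := fun h => hT₁ w hwT (by simp [h])
    rw [HasDetour, powerGraphVertexColoring_of_not_mem hm hvT]
    refine ⟨he 1 0 (by decide), w, hw1,
      powerGraph_adj_of_mem_zpowers (fun h => hvT (h ▸ hwT)) hvw, ?_⟩
    rw [powerGraphVertexColoring_of_mem (hT₁ w hwT) hwT]
    exact ⟨he 2 1 (by decide), he 2 0 (by decide)⟩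

theorem isRainbowColoring_powerGraph (hT₁ : ∀ a ∈ T, a⁻¹ ≠ a)
    (hT₂ : ∀ a : G, a⁻¹ ≠ a → (a⁻¹ ∈ T ↔ a ∉ T)) :
    IsRainbowColoring (powerGraph G)
      (hubColoring 1 (powerGraphVertexColoring ι e T) (e 0)) := by
  refine isRainbowColoring_hubColoring (fun x hx => powerGraph_adj_one_s2 hx) ?_
  rintro u ⟨hu, hdu⟩ v ⟨hv, hdv⟩ huv
  have hmax : ∀ x : G, x ≠ 1 →
      ¬ (powerGraph G).HasDetour 1 (powerGraphVertexColoring ι e T) (e 0) x →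
      IsMaximalInvolution x :=
    fun x hx hd => by_contra fun hm => hd (hasDetour_powerGraph hT₁ hT₂ hx hm)
  have hmu := hmax u hu hdu
  have hmv := hmax v hv hdv
  rw [powerGraphVertexColoring_of_isMaximalInvolution hmu,
    powerGraphVertexColoring_of_isMaximalInvolution hmv] at huv
  exact congrArg Subtype.val (ι.injective huv)

end VertexColoring

end PowerGraph

theorem rc_powerGraph_le_max_card_maximalInvolutions_three
    (G : Type*) [Group G] [Fintype G] :
    rainbowConnection (powerGraph G) ≤ max (Nat.card {x : G // IsMaximalInvolution x}) 3 := by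
  obtain ⟨T, hT₁, hT₂⟩ := (inv_involutive (G := G)).exists_transversal
  let ι := (Finite.equivFin {x : G // IsMaximalInvolution x}).toEmbedding.trans
    (Fin.castLEEmb (le_max_left _ 3))
  let e := Fin.castLEEmb (le_max_right (Nat.card {x : G // IsMaximalInvolution x}) 3)
  exact Nat.sInf_le ⟨_, isRainbowColoring_powerGraph (ι := ι) (e := e) hT₁ hT₂⟩
end

section
/- Let G be a finite group and let p be a prime dividing |G|. If the rainbow connection number of the power graph Γ_G equals 2, then G has exactly one subgroup of order p. -/
/-!
Let `x`, `y` have order `p` with `⟨x⟩ ≠ ⟨y⟩`. Then `x` and `y` are not adjacent in the power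
graph and their only common neighbor is `1`: a neighbor `z` with `x, y ∈ ⟨z⟩` is impossible
because a cyclic group has only one subgroup of order `p`, and the other cases force `z` into
`⟨x⟩ ∩ ⟨y⟩ = 1`. In a rainbow 2-coloring the path from `x` to `y` has length at most 2, so it is
`x - 1 - y`, and the edges `{x, 1}` and `{y, 1}` get different colors. Two distinct subgroups of
order `p` always produce a third one (a conjugate of one of them, or `⟨xy⟩` when `x` and `y`
normalize each other's subgroups and hence commute), and three pairwise distinct colors do not
fit in `Fin 2`.
-/

open Subgroup

theorem exists_isRainbowColoring_of_rainbowConnection_eq {V : Type*} {Γ : SimpleGraph V} {k : ℕ}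
    (hk : rainbowConnection Γ = k) (hk0 : k ≠ 0) :
    ∃ ζ : Sym2 V → Fin k, IsRainbowColoring Γ ζ :=
  hk ▸ Nat.sInf_mem (Nat.nonempty_of_pos_sInf (hk ▸ Nat.pos_of_ne_zero hk0))

theorem IsRainbowColoring.apply_ne_of_forall_adj_adj_eq {V : Type*} {Γ : SimpleGraph V}
    {ζ : Sym2 V → Fin 2} (hζ : IsRainbowColoring Γ ζ) {u v w : V} (huv : u ≠ v)
    (hadj : ¬Γ.Adj u v) (hw : ∀ z, Γ.Adj u z → Γ.Adj z v → z = w) :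
    ζ s(u, w) ≠ ζ s(v, w) := by
  obtain ⟨q, -, hq⟩ := hζ u v
  have hlen : q.length ≤ 2 := by
    simpa [SimpleGraph.Walk.length_edges] using hq.length_le_card
  cases q with
  | nil => exact absurd rfl huv
  | cons h₁ q =>
    cases q with
    | nil => exact absurd h₁ hadj
    | cons h₂ q =>
      cases q with
      | cons => simp at hlen
      | nil =>
        obtain rfl := hw _ h₁ h₂
        simpa [Sym2.eq_swap] using hq

section PowerGraph

variable {G : Type*} [Group G] {p : ℕ}

theorem ne_one_of_orderOf_eq_prime (hp : p.Prime) {x : G} (hx : orderOf x = p) : x ≠ 1 := by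
  rintro rfl
  exact hp.ne_one (hx ▸ orderOf_one)

variable [Finite G]

theorem mem_zpowers_pow_orderOf_div {x z : G} (hx : x ∈ zpowers z) :
    x ∈ zpowers (z ^ (orderOf z / orderOf x)) := by
  obtain ⟨n, rfl⟩ := mem_powers_iff_mem_zpowers.mpr hx
  rw [orderOf_pow, Nat.div_div_self (Nat.gcd_dvd_left _ _) (orderOf_pos z).ne']
  obtain ⟨t, ht⟩ := Nat.gcd_dvd_right (orderOf z) n
  have hn : z ^ n = (z ^ Nat.gcd (orderOf z) n) ^ t := by rw [← pow_mul, ← ht]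
  show z ^ n ∈ _
  rw [hn]
  exact npow_mem_zpowers _ t

theorem zpowers_eq_of_mem_zpowers_of_orderOf_eq {x y z : G} (hx : x ∈ zpowers z)
    (hy : y ∈ zpowers z) (hxy : orderOf x = orderOf y) : zpowers x = zpowers y := by
  have key : ∀ w ∈ zpowers z, orderOf w = orderOf x →
      zpowers w = zpowers (z ^ (orderOf z / orderOf x)) := by
    intro w hw hwx
    refine eq_of_le_of_card_ge (zpowers_le_of_mem (hwx ▸ mem_zpowers_pow_orderOf_div hw)) ?_
    rw [Nat.card_zpowers, Nat.card_zpowers, hwx, orderOf_pow_orderOf_div (orderOf_pos z).ne'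
      (hwx ▸ orderOf_dvd_of_mem_zpowers hw)]
  rw [key x hx rfl, key y hy hxy.symm]

theorem zpowers_eq_of_mem_of_card_eq_prime (hp : p.Prime) {H : Subgroup G}
    (hH : Nat.card H = p) {x : G} (hx : x ∈ H) (hx1 : x ≠ 1) : zpowers x = H := by
  refine eq_of_le_of_card_ge (zpowers_le_of_mem hx) ?_
  have hxp : orderOf x = p := (hp.eq_one_or_self_of_dvd _
    (hH ▸ H.orderOf_dvd_natCard hx)).resolve_left (mt orderOf_eq_one_iff.mp hx1)
  rw [Nat.card_zpowers, hxp, hH]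

theorem zpowers_eq_of_mem_zpowers_of_orderOf_eq_prime (hp : p.Prime) {x y : G}
    (hx : orderOf x = p) (hy : y ∈ zpowers x) (hy1 : y ≠ 1) : zpowers y = zpowers x :=
  zpowers_eq_of_mem_of_card_eq_prime hp ((Nat.card_zpowers x).trans hx) hy hy1

theorem notMem_zpowers_of_orderOf_eq_prime (hp : p.Prime) {x y : G} (hx : orderOf x = p)
    (hy : orderOf y = p) (hxy : zpowers x ≠ zpowers y) : y ∉ zpowers x := fun hyx =>
  hxy (zpowers_eq_of_mem_zpowers_of_orderOf_eq_prime hp hx hyx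
    (ne_one_of_orderOf_eq_prime hp hy)).symm

theorem eq_one_of_mem_zpowers_of_orderOf_eq_prime (hp : p.Prime) {x y z : G} (hx : orderOf x = p)
    (hy : orderOf y = p) (hxy : zpowers x ≠ zpowers y) (hzx : z ∈ zpowers x)
    (hzy : z ∈ zpowers y) : z = 1 := by
  by_contra hz1
  exact hxy ((zpowers_eq_of_mem_zpowers_of_orderOf_eq_prime hp hx hzx hz1).symm.trans
    (zpowers_eq_of_mem_zpowers_of_orderOf_eq_prime hp hy hzy hz1))

theorem conj_mem_zpowers_or_exists_third_of_orderOf_eq_prime (hp : p.Prime) {x y : G}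
    (hx : orderOf x = p) (hy : orderOf y = p) (hxy : zpowers x ≠ zpowers y) :
    y * x * y⁻¹ ∈ zpowers x ∨
      ∃ w, orderOf w = p ∧ zpowers w ≠ zpowers x ∧ zpowers w ≠ zpowers y := by
  refine or_iff_not_imp_left.mpr fun hconj => ⟨y * x * y⁻¹, ?_, ?_, fun he => ?_⟩
  · rw [← hx, ← MulAut.conj_apply]
    exact orderOf_injective (MulAut.conj y).toMonoidHom (MulAut.conj y).injective x
  · exact fun he => hconj (he ▸ mem_zpowers _)
  · have hconj_mem : y * x * y⁻¹ ∈ zpowers y := he ▸ mem_zpowers _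
    refine notMem_zpowers_of_orderOf_eq_prime hp hy hx hxy.symm ?_
    simpa [mul_assoc] using mul_mem (mul_mem (inv_mem (mem_zpowers y)) hconj_mem) (mem_zpowers y)

theorem commute_of_conj_mem_zpowers_of_orderOf_eq_prime (hp : p.Prime) {x y : G}
    (hx : orderOf x = p) (hy : orderOf y = p) (hxy : zpowers x ≠ zpowers y)
    (hyxy : y * x * y⁻¹ ∈ zpowers x) (hxyx : x * y * x⁻¹ ∈ zpowers y) : Commute x y := by
  refine commutatorElement_eq_one_iff_mul_comm.mp
    (eq_one_of_mem_zpowers_of_orderOf_eq_prime hp hx hy hxy ?_ ?_)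
  · simpa [commutatorElement_def, mul_assoc] using mul_mem (mem_zpowers x) (inv_mem hyxy)
  · exact mul_mem hxyx (inv_mem (mem_zpowers y))

theorem exists_third_zpowers_of_commute (hp : p.Prime) {x y : G} (hx : orderOf x = p)
    (hy : orderOf y = p) (hxy : zpowers x ≠ zpowers y) (hcomm : Commute x y) :
    ∃ w, orderOf w = p ∧ zpowers w ≠ zpowers x ∧ zpowers w ≠ zpowers y := by
  have : Fact p.Prime := ⟨hp⟩
  have hy_notMem := notMem_zpowers_of_orderOf_eq_prime hp hx hy hxy
  have hx_notMem := notMem_zpowers_of_orderOf_eq_prime hp hy hx hxy.symm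
  have hxy1 : x * y ≠ 1 := fun h =>
    hy_notMem (eq_inv_of_mul_eq_one_right h ▸ inv_mem (mem_zpowers x))
  have hw : orderOf (x * y) = p := orderOf_eq_prime
    (by rw [hcomm.mul_pow, ← hx, pow_orderOf_eq_one, one_mul, hx, ← hy, pow_orderOf_eq_one]) hxy1
  refine ⟨x * y, hw, fun he => hy_notMem ?_, fun he => hx_notMem ?_⟩
  · have hxy_mem : x * y ∈ zpowers x := he ▸ mem_zpowers (x * y)
    simpa using mul_mem (inv_mem (mem_zpowers x)) hxy_mem
  · have hxy_mem : x * y ∈ zpowers y := he ▸ mem_zpowers (x * y)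
    simpa using mul_mem hxy_mem (inv_mem (mem_zpowers y))

theorem exists_third_zpowers_of_orderOf_eq_prime (hp : p.Prime) {x y : G} (hx : orderOf x = p)
    (hy : orderOf y = p) (hxy : zpowers x ≠ zpowers y) :
    ∃ w, orderOf w = p ∧ zpowers w ≠ zpowers x ∧ zpowers w ≠ zpowers y := by
  rcases conj_mem_zpowers_or_exists_third_of_orderOf_eq_prime hp hx hy hxy with hyxy | h
  · rcases conj_mem_zpowers_or_exists_third_of_orderOf_eq_prime hp hy hx hxy.symm with
      hxyx | ⟨w, hw, hwy, hwx⟩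
    · exact exists_third_zpowers_of_commute hp hx hy hxy
        (commute_of_conj_mem_zpowers_of_orderOf_eq_prime hp hx hy hxy hyxy hxyx)
    · exact ⟨w, hw, hwx, hwy⟩
  · exact h

theorem powerGraph_not_adj_of_orderOf_eq_prime (hp : p.Prime) {x y : G} (hx : orderOf x = p)
    (hy : orderOf y = p) (hxy : zpowers x ≠ zpowers y) : ¬(powerGraph G).Adj x y := by
  rintro ⟨-, hxy' | hyx⟩
  · exact notMem_zpowers_of_orderOf_eq_prime hp hy hx hxy.symm hxy'
  · exact notMem_zpowers_of_orderOf_eq_prime hp hx hy hxy hyx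

theorem eq_one_of_powerGraph_adj_of_orderOf_eq_prime (hp : p.Prime) {x y z : G}
    (hx : orderOf x = p) (hy : orderOf y = p) (hxy : zpowers x ≠ zpowers y)
    (hxz : (powerGraph G).Adj x z) (hzy : (powerGraph G).Adj z y) : z = 1 := by
  obtain ⟨-, hxz | hzx⟩ := hxz <;> obtain ⟨-, hzy | hyz⟩ := hzy
  · exact absurd (zpowers_le_of_mem hzy hxz)
      (notMem_zpowers_of_orderOf_eq_prime hp hy hx hxy.symm)
  · exact absurd (zpowers_eq_of_mem_zpowers_of_orderOf_eq hxz hyz (hx.trans hy.symm)) hxy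
  · exact eq_one_of_mem_zpowers_of_orderOf_eq_prime hp hx hy hxy hzx hzy
  · exact absurd (zpowers_le_of_mem hzx hyz) (notMem_zpowers_of_orderOf_eq_prime hp hx hy hxy)

theorem IsRainbowColoring.powerGraph_apply_ne (hp : p.Prime) {ζ : Sym2 G → Fin 2}
    (hζ : IsRainbowColoring (powerGraph G) ζ) {x y : G} (hx : orderOf x = p)
    (hy : orderOf y = p) (hxy : zpowers x ≠ zpowers y) : ζ s(x, 1) ≠ ζ s(y, 1) :=
  hζ.apply_ne_of_forall_adj_adj_eq (fun h => hxy (congrArg zpowers h))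
    (powerGraph_not_adj_of_orderOf_eq_prime hp hx hy hxy)
    (fun _ => eq_one_of_powerGraph_adj_of_orderOf_eq_prime hp hx hy hxy)

end PowerGraph

theorem unique_subgroup_of_prime_order_of_rc_eq_two
    (G : Type*) [Group G] [Fintype G] (p : ℕ) (hp : p.Prime)
    (hdvd : p ∣ Fintype.card G)
    (hrc : rainbowConnection (powerGraph G) = 2) :
    ∃! H : Subgroup G, Nat.card H = p := by
  have : Fact p.Prime := ⟨hp⟩
  obtain ⟨ζ, hζ⟩ := exists_isRainbowColoring_of_rainbowConnection_eq hrc two_ne_zero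
  obtain ⟨g, hg⟩ := exists_prime_orderOf_dvd_card p hdvd
  refine ⟨zpowers g, (Nat.card_zpowers g).trans hg, fun K hK => ?_⟩
  obtain ⟨k, hkK, hk1⟩ := K.bot_or_exists_ne_one.resolve_left fun h =>
    hp.ne_one (by rw [← hK, h, card_bot])
  have hK_eq : zpowers k = K := zpowers_eq_of_mem_of_card_eq_prime hp hK hkK hk1
  have hk : orderOf k = p := by rw [← Nat.card_zpowers, hK_eq, hK]
  rw [← hK_eq]
  by_contra hkg
  obtain ⟨w, hw, hwk, hwg⟩ := exists_third_zpowers_of_orderOf_eq_prime hp hk hg hkg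
  have hkg' := hζ.powerGraph_apply_ne hp hk hg hkg
  have hwk' := hζ.powerGraph_apply_ne hp hw hk hwk
  have hwg' := hζ.powerGraph_apply_ne hp hw hg hwg
  omega
end

section
/- If G is a finite cyclic group whose order is not a power of any prime, then the rainbow connection number of the power graph Γ_G equals 2. -/
open Subgroup

theorem Nat.card_primeFactors_le_totient (n : ℕ) : n.primeFactors.card ≤ n.totient := by
  rcases eq_or_ne n 0 with rfl | hn
  · simp
  set s := n.primeFactors
  set f : ℕ → ℕ := fun p => p ^ (n.factorization p - 1) * (p - 1)
  have hf_pos : ∀ p ∈ s, 1 ≤ f p := fun p hp =>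
    have := (Nat.prime_of_mem_primeFactors hp).two_le
    Nat.mul_pos (by positivity) (by omega)
  have hf_two : ∀ p ∈ s.erase 2, 2 ≤ f p := fun p hp => by
    have := (Nat.prime_of_mem_primeFactors (Finset.mem_of_mem_erase hp)).two_le
    have := Finset.ne_of_mem_erase hp
    exact (show 2 ≤ p - 1 by omega).trans (Nat.le_mul_of_pos_left _ (by positivity))
  calc s.card ≤ (s.erase 2).card + 1 := by
        have := Finset.pred_card_le_card_erase (s := s) (a := 2)
        omega
    _ ≤ 2 ^ (s.erase 2).card := Nat.lt_two_pow_self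
    _ = ∏ _p ∈ s.erase 2, 2 := (Finset.prod_const 2).symm
    _ ≤ ∏ p ∈ s.erase 2, f p := Finset.prod_le_prod' hf_two
    _ ≤ ∏ p ∈ s, f p :=
      Finset.prod_le_prod_of_subset_of_one_le' (Finset.erase_subset _ _) fun p hp _ => hf_pos p hp
    _ = n.totient := by
      rw [Nat.totient_eq_prod_factorization hn, Finsupp.prod, Nat.support_factorization]

section RainbowConnection

variable {V : Type*} {Γ : SimpleGraph V} {k : ℕ}

theorem IsRainbowColoring.two_le {ζ : Sym2 V → Fin k} (hζ : IsRainbowColoring Γ ζ) {u v : V}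
    (huv : u ≠ v) (hnadj : ¬Γ.Adj u v) : 2 ≤ k := by
  obtain ⟨p, -, hnodup⟩ := hζ u v
  have hlen : 2 ≤ p.length := by
    by_contra! h
    interval_cases hp : p.length
    · exact huv (SimpleGraph.Walk.eq_of_length_eq_zero hp)
    · exact hnadj (SimpleGraph.Walk.adj_of_length_eq_one hp)
  simpa using (hlen.trans_eq p.length_edges.symm).trans (by simpa using hnodup.length_le_card)

theorem isRainbowColoring_of_forall_not_adj {ζ : Sym2 V → Fin k}
    (h : ∀ u v, u ≠ v → ¬Γ.Adj u v →
      ∃ w, Γ.Adj u w ∧ Γ.Adj w v ∧ ζ s(u, w) ≠ ζ s(w, v)) :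
    IsRainbowColoring Γ ζ := by
  intro u v
  by_cases huv : u = v
  · subst huv
    exact ⟨.nil, .nil, by simp⟩
  by_cases hadj : Γ.Adj u v
  · exact ⟨.cons hadj .nil, by simp [huv], by simp⟩
  obtain ⟨w, huw, hwv, hne⟩ := h u v huv hadj
  exact ⟨.cons huw (.cons hwv .nil), by simp [huv, huw.ne, hwv.ne], by simpa using hne⟩

theorem rainbowConnection_eq_two {ζ : Sym2 V → Fin 2} (hζ : IsRainbowColoring Γ ζ) {u v : V}
    (huv : u ≠ v) (hnadj : ¬Γ.Adj u v) : rainbowConnection Γ = 2 :=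
  le_antisymm (Nat.sInf_le ⟨ζ, hζ⟩)
    (le_csInf ⟨2, ζ, hζ⟩ fun _ ⟨_, hξ⟩ => hξ.two_le huv hnadj)

end RainbowConnection

section PowerGraph

variable {G : Type*} [Group G]

theorem powerGraph.orderOf_dvd_or_of_adj {x y : G} (h : (powerGraph G).Adj x y) :
    orderOf x ∣ orderOf y ∨ orderOf y ∣ orderOf x :=
  h.2.imp orderOf_dvd_of_mem_zpowers orderOf_dvd_of_mem_zpowers

noncomputable def primeLabelColor (π : G → ℕ) (x y : G) : Fin 2 :=
  if (orderOf x).factorization (π y) = (orderOf y).factorization (π y) then 1 else 0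

noncomputable def primeLabelColoring (π : G → ℕ) : Sym2 G → Fin 2 :=
  Sym2.lift ⟨fun x y => if orderOf x ≤ orderOf y then primeLabelColor π x y
    else primeLabelColor π y x, fun x y => by
      dsimp only
      rcases lt_trichotomy (orderOf x) (orderOf y) with h | h | h
      · rw [if_pos h.le, if_neg h.not_ge]
      · simp [primeLabelColor, h]
      · rw [if_neg h.not_ge, if_pos h.le]⟩

theorem primeLabelColoring_mk_of_le (π : G → ℕ) {x y : G} (h : orderOf x ≤ orderOf y) :
    primeLabelColoring π s(x, y) = primeLabelColor π x y :=
  if_pos h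

variable [Fintype G]

theorem exists_ne_not_adj_powerGraph (h : (Fintype.card G).primeFactors.Nontrivial) :
    ∃ a b : G, a ≠ b ∧ ¬(powerGraph G).Adj a b := by
  obtain ⟨p, hp, q, hq, hpq⟩ := h
  have hp' := Nat.prime_of_mem_primeFactors hp
  have hq' := Nat.prime_of_mem_primeFactors hq
  have := Fact.mk hp'
  have := Fact.mk hq'
  obtain ⟨a, ha⟩ := exists_prime_orderOf_dvd_card p (Nat.dvd_of_mem_primeFactors hp)
  obtain ⟨b, hb⟩ := exists_prime_orderOf_dvd_card q (Nat.dvd_of_mem_primeFactors hq)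
  refine ⟨a, b, fun hab => hpq (by rw [← ha, ← hb, hab]), fun hadj => ?_⟩
  rcases powerGraph.orderOf_dvd_or_of_adj hadj with hdvd | hdvd <;> rw [ha, hb] at hdvd
  · exact hpq ((Nat.prime_dvd_prime_iff_eq hp' hq').mp hdvd)
  · exact hpq ((Nat.prime_dvd_prime_iff_eq hq' hp').mp hdvd).symm

def IsPrimeLabeling (π : G → ℕ) : Prop :=
  ∀ L, L ∣ Fintype.card G → ∀ p ∈ L.primeFactors, ∃ w : G, orderOf w = L ∧ π w = p

variable [IsCyclic G]

theorem IsCyclic.mem_zpowers_of_orderOf_dvd {x y : G} (h : orderOf x ∣ orderOf y) :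
    x ∈ zpowers y := by
  classical
  set d := orderOf y
  set S := Finset.univ.filter fun a : G => a ^ d = 1
  have hsub : (zpowers y : Set G).toFinset ⊆ S := fun a ha =>
    Finset.mem_filter.mpr ⟨Finset.mem_univ a,
      orderOf_dvd_iff_pow_eq_one.mp (orderOf_dvd_of_mem_zpowers (Set.mem_toFinset.mp ha))⟩
  have hcard : S.card ≤ (zpowers y : Set G).toFinset.card := by
    simp only [Set.toFinset_card, SetLike.coe_sort_coe]
    rw [Fintype.card_zpowers]
    exact IsCyclic.card_pow_eq_one_le (orderOf_pos y)
  have hx : x ∈ S :=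
    Finset.mem_filter.mpr ⟨Finset.mem_univ x, orderOf_dvd_iff_pow_eq_one.mp h⟩
  rw [← Finset.eq_of_subset_of_card_le hsub hcard] at hx
  simpa using hx

theorem IsCyclic.powerGraph_adj_iff {x y : G} :
    (powerGraph G).Adj x y ↔ x ≠ y ∧ (orderOf x ∣ orderOf y ∨ orderOf y ∣ orderOf x) :=
  ⟨fun h => ⟨h.1, powerGraph.orderOf_dvd_or_of_adj h⟩, fun ⟨hne, h⟩ =>
    ⟨hne, h.imp IsCyclic.mem_zpowers_of_orderOf_dvd IsCyclic.mem_zpowers_of_orderOf_dvd⟩⟩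

theorem IsCyclic.exists_isPrimeLabeling : ∃ π : G → ℕ, IsPrimeLabeling π := by
  classical
  have hι : ∀ L, ∃ ι : ℕ → G, L ∣ Fintype.card G →
      Set.MapsTo ι L.primeFactors {w | orderOf w = L} ∧ Set.InjOn ι L.primeFactors := by
    intro L
    by_cases hL : L ∣ Fintype.card G
    · have hle : (L.primeFactors : Set ℕ).encard ≤ {w : G | orderOf w = L}.encard := by
        rw [← Finset.coe_filter_univ, Set.encard_coe_eq_coe_finsetCard,
          Set.encard_coe_eq_coe_finsetCard, IsCyclic.card_orderOf_eq_totient hL]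
        exact_mod_cast L.card_primeFactors_le_totient
      obtain ⟨ι, hmaps, hinj⟩ := (Set.toFinite _).exists_injOn_of_encard_le hle
      exact ⟨ι, fun _ => ⟨hmaps, hinj⟩⟩
    · exact ⟨fun _ => 1, fun h => absurd h hL⟩
  choose ι hι using hι
  refine ⟨fun w => Function.invFunOn (ι (orderOf w)) (orderOf w).primeFactors w,
    fun L hL p hp => ?_⟩
  obtain ⟨hmaps, hinj⟩ := hι L hL
  have hw : orderOf (ι L p) = L := hmaps hp
  refine ⟨ι L p, hw, ?_⟩
  simp only [hw]
  exact hinj.leftInvOn_invFunOn hp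

theorem IsCyclic.isRainbowColoring_primeLabelColoring {π : G → ℕ} (hπ : IsPrimeLabeling π) :
    IsRainbowColoring (powerGraph G) (primeLabelColoring π) := by
  refine isRainbowColoring_of_forall_not_adj fun u v huv hnadj => ?_
  simp only [IsCyclic.powerGraph_adj_iff, not_and, not_or] at hnadj
  obtain ⟨hnuv, hnvu⟩ := hnadj huv
  have hu0 := (orderOf_pos u).ne'
  have hv0 := (orderOf_pos v).ne'
  obtain ⟨p, hp⟩ : ∃ p, (orderOf v).factorization p < (orderOf u).factorization p := by
    by_contra! h
    exact hnuv ((Nat.factorization_le_iff_dvd hu0 hv0).mp h)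
  set L := Nat.lcm (orderOf u) (orderOf v)
  have hLp : L.factorization p = (orderOf u).factorization p := by
    rw [Nat.factorization_lcm hu0 hv0, Finsupp.sup_apply, sup_eq_left.mpr hp.le]
  have hpL : p ∈ L.primeFactors := by
    rw [← Nat.support_factorization, Finsupp.mem_support_iff]
    omega
  obtain ⟨w, hw, rfl⟩ := hπ L (Nat.lcm_dvd orderOf_dvd_card orderOf_dvd_card) p hpL
  have huw : orderOf u ∣ orderOf w := hw ▸ Nat.dvd_lcm_left _ _
  have hvw : orderOf v ∣ orderOf w := hw ▸ Nat.dvd_lcm_right _ _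
  have hu_lt : orderOf u < orderOf w :=
    (Nat.le_of_dvd (orderOf_pos w) huw).lt_of_ne fun h => hnvu (h ▸ hvw)
  have hv_lt : orderOf v < orderOf w :=
    (Nat.le_of_dvd (orderOf_pos w) hvw).lt_of_ne fun h => hnuv (h ▸ huw)
  refine ⟨w, IsCyclic.powerGraph_adj_iff.mpr ⟨fun h => hu_lt.ne (h ▸ rfl), .inl huw⟩,
    IsCyclic.powerGraph_adj_iff.mpr ⟨fun h => hv_lt.ne (h ▸ rfl), .inr hvw⟩, ?_⟩
  rw [primeLabelColoring_mk_of_le π hu_lt.le, Sym2.eq_swap,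
    primeLabelColoring_mk_of_le π hv_lt.le]
  simp [primeLabelColor, hw, hLp, hp.ne]

end PowerGraph

theorem rc_powerGraph_eq_two_of_cyclic_not_primePow
    (G : Type*) [Group G] [Fintype G] (hcyc : IsCyclic G)
    (hpp : ¬ ∃ p k : ℕ, p.Prime ∧ Fintype.card G = p ^ k) :
    rainbowConnection (powerGraph G) = 2 := by
  have hnt : (Fintype.card G).primeFactors.Nontrivial := by
    have h1 : Fintype.card G ≠ 1 := fun h => hpp ⟨2, 0, Nat.prime_two, h⟩
    have h0 : Fintype.card G ≠ 0 := Fintype.card_ne_zero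
    rw [← Nat.not_isPrimePow_iff_nontrivial_of_two_le (by omega)]
    rintro ⟨p, k, hp, -, hpk⟩
    exact hpp ⟨p, k, Nat.prime_iff.mpr hp, hpk.symm⟩
  obtain ⟨a, b, hab, hnadj⟩ := exists_ne_not_adj_powerGraph hnt
  obtain ⟨π, hπ⟩ := IsCyclic.exists_isPrimeLabeling (G := G)
  exact rainbowConnection_eq_two (IsCyclic.isRainbowColoring_primeLabelColoring hπ) hab hnadj
end
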